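/- arXiv:1204.2377 — 5 statements merged into one kernel-verified Lean document; each statement's English description precedes it below -/
import Mathlib

section
/- There exists a group homomorphism f: B_4 → Aut(F_2) from the braid group on 4 strands sending the standard generators to f(σ₁) = G, f(σ₂) = D⁻¹, f(σ₃) = G̃. -/
open FreeGroup

/-- The braid relations defining the braid group `B₄` on generators `σ₁, σ₂, σ₃`. -/
def braidRels4 : Set (FreeGroup (Fin 3)) :=
  { of 0 * of 1 * of 0 * (of 1 * of 0 * of 1)⁻¹,
    of 1 * of 2 * of 1 * (of 2 * of 1 * of 2)⁻¹,
    of 0 * of 2 * (of 2 * of 0)⁻¹ }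

/-!
Put `E := D⁻¹`, the automorphism `a ↦ b⁻¹a, b ↦ b`. By the universal property of the
presentation it suffices that `G, E, G̃` satisfy the braid relations, and since an automorphism
of `F₂` is determined by the images of `a` and `b`, each relation reduces to two identities
between explicit words in `a, b`, which hold after free reduction.
-/

theorem FreeGroup.mulEquiv_ext {α M : Type*} [Monoid M] {φ ψ : FreeGroup α ≃* M}
    (h : ∀ a, φ (of a) = ψ (of a)) : φ = ψ :=
  MulEquiv.toMonoidHom_injective (FreeGroup.ext_hom _ _ h)

theorem exists_hom_braidRels4_of_braid_relations {H : Type*} [Group H] {x y z : H}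
    (hxy : x * y * x = y * x * y) (hyz : y * z * y = z * y * z) (hxz : x * z = z * x) :
    ∃ f : PresentedGroup braidRels4 →* H,
      f (PresentedGroup.of 0) = x ∧ f (PresentedGroup.of 1) = y ∧ f (PresentedGroup.of 2) = z := by
  have hrels : ∀ r ∈ braidRels4, FreeGroup.lift ![x, y, z] r = 1 := by
    rintro r (rfl | rfl | rfl) <;>
      simp only [_root_.map_mul, _root_.map_inv, lift_apply_of, mul_inv_eq_one, Matrix.cons_val_zero,
        Matrix.cons_val_one, Matrix.cons_val_two, Matrix.head_cons, Matrix.tail_cons] <;>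
      assumption
  exact ⟨PresentedGroup.toGroup hrels, by simp [PresentedGroup.toGroup.of]⟩

section Automorphisms

variable {G E Gt : MulAut (FreeGroup (Fin 2))}

theorem braid_G_E (hGa : G (of 0) = of 0) (hGb : G (of 1) = of 0 * of 1)
    (hEa : E (of 0) = (of 1)⁻¹ * of 0) (hEb : E (of 1) = of 1) :
    G * E * G = E * G * E := by
  refine FreeGroup.mulEquiv_ext fun i => ?_
  fin_cases i <;> simp [hGa, hGb, hEa, hEb, mul_assoc]

theorem braid_E_Gt (hEa : E (of 0) = (of 1)⁻¹ * of 0) (hEb : E (of 1) = of 1)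
    (hGta : Gt (of 0) = of 0) (hGtb : Gt (of 1) = of 1 * of 0) :
    E * Gt * E = Gt * E * Gt := by
  refine FreeGroup.mulEquiv_ext fun i => ?_
  fin_cases i <;> simp [hEa, hEb, hGta, hGtb, mul_assoc]

theorem G_mul_Gt_comm (hGa : G (of 0) = of 0) (hGb : G (of 1) = of 0 * of 1)
    (hGta : Gt (of 0) = of 0) (hGtb : Gt (of 1) = of 1 * of 0) :
    G * Gt = Gt * G := by
  refine FreeGroup.mulEquiv_ext fun i => ?_
  fin_cases i <;> simp [hGa, hGb, hGta, hGtb, mul_assoc]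

end Automorphisms

/-- There is a group homomorphism `f : B₄ → Aut(F₂)` with `f(σ₁) = G`,
`f(σ₂) = D⁻¹`, `f(σ₃) = G̃`. -/
theorem exists_hom_B4_to_AutF2
    (G D Gt : MulAut (FreeGroup (Fin 2)))
    (hGa : G (of 0) = of 0) (hGb : G (of 1) = of 0 * of 1)
    (hDa : D (of 0) = of 1 * of 0) (hDb : D (of 1) = of 1)
    (hGta : Gt (of 0) = of 0) (hGtb : Gt (of 1) = of 1 * of 0) :
    ∃ f : PresentedGroup braidRels4 →* MulAut (FreeGroup (Fin 2)),
      f (PresentedGroup.of 0) = G ∧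
      f (PresentedGroup.of 1) = D⁻¹ ∧
      f (PresentedGroup.of 2) = Gt := by
  have hEa : D⁻¹ (of 0) = (of 1)⁻¹ * of 0 := by
    rw [MulAut.inv_apply, MulEquiv.symm_apply_eq, _root_.map_mul, _root_.map_inv, hDa, hDb,
      inv_mul_cancel_left]
  have hEb : D⁻¹ (of 1) = of 1 := by
    rw [MulAut.inv_apply, MulEquiv.symm_apply_eq, hDb]
  exact exists_hom_braidRels4_of_braid_relations (braid_G_E hGa hGb hEa hEb)
    (braid_E_Gt hEa hEb hGta hGtb) (G_mul_Gt_comm hGa hGb hGta hGtb)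
end

section
/- For 1 ≤ i ≤ g−1, the automorphisms u_{2i} and u_{2i+1} of F_{2g} satisfy the braid relation u_{2i} u_{2i+1} u_{2i} = u_{2i+1} u_{2i} u_{2i+1}, where u_{2i} sends a_i to b_i⁻¹·a_i fixing other generators, and u_{2i+1} sends b_i to b_i·a_i·a_{i+1}⁻¹ and b_{i+1} to a_{i+1}·a_i⁻¹·b_{i+1} fixing other generators. -/
/-!
An automorphism of a free group is determined by its values on the generators. Both
`U * V * U` and `V * U * V` send `aᵢ ↦ aᵢ₊₁ aᵢ⁻¹ bᵢ⁻¹ aᵢ`, `bᵢ ↦ aᵢ aᵢ₊₁⁻¹` and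
`bᵢ₊₁ ↦ aᵢ₊₁ aᵢ⁻¹ bᵢ bᵢ₊₁`, and fix every other generator.
-/

open FreeGroup

namespace FreeGroup

variable {α : Type*}

theorem mulEquiv_ext_s8 {M : Type*} [Monoid M] {φ ψ : FreeGroup α ≃* M}
    (h : ∀ a, φ (of a) = ψ (of a)) : φ = ψ :=
  MulEquiv.toMonoidHom_injective (ext_hom _ _ h)

theorem braid_of_apply_of {U V : MulAut (FreeGroup α)} {a₁ a₂ b₁ b₂ : α}
    (ha : a₁ ≠ a₂) (ha₁b₁ : a₁ ≠ b₁) (ha₁b₂ : a₁ ≠ b₂) (ha₂b₁ : a₂ ≠ b₁) (ha₂b₂ : a₂ ≠ b₂)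
    (hU : U (of a₁) = (of b₁)⁻¹ * of a₁) (hUfix : ∀ x, x ≠ a₁ → U (of x) = of x)
    (hV₁ : V (of b₁) = of b₁ * of a₁ * (of a₂)⁻¹)
    (hV₂ : V (of b₂) = of a₂ * (of a₁)⁻¹ * of b₂)
    (hVfix : ∀ x, x ≠ b₁ → x ≠ b₂ → V (of x) = of x) :
    U * V * U = V * U * V := by
  have hUa₂ := hUfix a₂ ha.symm
  have hUb₁ := hUfix b₁ ha₁b₁.symm
  have hUb₂ := hUfix b₂ ha₁b₂.symm
  have hVa₁ := hVfix a₁ ha₁b₁ ha₁b₂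
  have hVa₂ := hVfix a₂ ha₂b₁ ha₂b₂
  refine mulEquiv_ext_s8 fun x => ?_
  simp only [MulAut.mul_apply]
  by_cases hxa₁ : x = a₁
  · subst hxa₁
    simp only [hU, _root_.map_mul, _root_.map_inv, hVa₁, hV₁, hUb₁, hUa₂]
    group
  by_cases hxb₁ : x = b₁
  · subst hxb₁
    simp only [hUb₁, hV₁, _root_.map_mul, _root_.map_inv, hU, hUa₂, hVa₁, hVa₂]
    group
  by_cases hxb₂ : x = b₂
  · subst hxb₂
    simp only [hUb₂, hV₂, _root_.map_mul, _root_.map_inv, hU, hUa₂, hVa₁, hVa₂, hV₁]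
    group
  simp only [hUfix x hxa₁, hVfix x hxb₁ hxb₂]

end FreeGroup

theorem braid_relation_even_odd_general (g i : ℕ) (hi : i + 1 < g)
    (U V : MulAut (FreeGroup (Fin g ⊕ Fin g)))
    (I : Fin g) (I' : Fin g) (hI : I = ⟨i, Nat.lt_of_succ_lt hi⟩) (hI' : I' = ⟨i + 1, hi⟩)
    (hU : U (of (Sum.inl I)) = (of (Sum.inr I))⁻¹ * of (Sum.inl I))
    (hUfix : ∀ x : Fin g ⊕ Fin g, x ≠ Sum.inl I → U (of x) = of x)
    (hV1 : V (of (Sum.inr I)) = of (Sum.inr I) * of (Sum.inl I) * (of (Sum.inl I'))⁻¹)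
    (hV2 : V (of (Sum.inr I')) = of (Sum.inl I') * (of (Sum.inl I))⁻¹ * of (Sum.inr I'))
    (hVfix : ∀ x : Fin g ⊕ Fin g, x ≠ Sum.inr I → x ≠ Sum.inr I' → V (of x) = of x) :
    U * V * U = V * U * V := by
  have hII' : I ≠ I' := by simp [hI, hI', Fin.ext_iff]
  exact braid_of_apply_of (Sum.inl_injective.ne hII') Sum.inl_ne_inr Sum.inl_ne_inr
    Sum.inl_ne_inr Sum.inl_ne_inr hU hUfix hV1 hV2 hVfix

/-- For `1 ≤ i ≤ g-1` (here `0`-indexed: `i+1 < g`), the automorphisms `u₂ᵢ` and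
`u₂ᵢ₊₁` of the free group `F₂g` on generators `aⱼ = of (Sum.inl j)`,
`bⱼ = of (Sum.inr j)` satisfy the braid relation
`u₂ᵢ u₂ᵢ₊₁ u₂ᵢ = u₂ᵢ₊₁ u₂ᵢ u₂ᵢ₊₁`.  Here `u₂ᵢ` sends `aᵢ ↦ bᵢ⁻¹·aᵢ` fixing all
other generators, and `u₂ᵢ₊₁` sends `bᵢ ↦ bᵢ·aᵢ·aᵢ₊₁⁻¹`, `bᵢ₊₁ ↦ aᵢ₊₁·aᵢ⁻¹·bᵢ₊₁`,
fixing all other generators. -/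
theorem braid_relation_even_odd (g i : ℕ) (hg : 2 ≤ g) (hi : i + 1 < g)
    (U V : MulAut (FreeGroup (Fin g ⊕ Fin g)))
    (I : Fin g) (I' : Fin g) (hI : I = ⟨i, Nat.lt_of_succ_lt hi⟩) (hI' : I' = ⟨i + 1, hi⟩)
    (hU : U (of (Sum.inl I)) = (of (Sum.inr I))⁻¹ * of (Sum.inl I))
    (hUfix : ∀ x : Fin g ⊕ Fin g, x ≠ Sum.inl I → U (of x) = of x)
    (hV1 : V (of (Sum.inr I)) = of (Sum.inr I) * of (Sum.inl I) * (of (Sum.inl I'))⁻¹)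
    (hV2 : V (of (Sum.inr I')) = of (Sum.inl I') * (of (Sum.inl I))⁻¹ * of (Sum.inr I'))
    (hVfix : ∀ x : Fin g ⊕ Fin g, x ≠ Sum.inr I → x ≠ Sum.inr I' → V (of x) = of x) :
    U * V * U = V * U * V :=
  braid_relation_even_odd_general g i hi U V I I' hI hI' hU hUfix hV1 hV2 hVfix
end

section
/- For the free group F_4 on a₁, a₂, b₁, b₂, the five automorphisms u₁,…,u₅ (defined by u₁(b₁)=a₁b₁, u₂(a₁)=b₁⁻¹a₁, u₃(b₁)=b₁a₁a₂⁻¹ and u₃(b₂)=a₂a₁⁻¹b₂, u₄(a₂)=b₂⁻¹a₂, u₅(b₂)=b₂a₂, each fixing all other generators) satisfy all the braid relations: u_i u_j = u_j u_i for |i−j| > 1 and u_i u_j u_i = u_j u_i u_j for |i−j| = 1. -/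
/-!
An automorphism of a free group is determined by the images of the generators, so each braid
relation reduces to checking that both sides send `a₁, a₂, b₁, b₂` to words that agree after
free reduction.
-/

open FreeGroup

/-- `F₄` is the free group on four generators `a₁ = of 0`, `a₂ = of 1`,
`b₁ = of 2`, `b₂ = of 3`. -/
abbrev F4 := FreeGroup (Fin 4)

/-- Specification of the five automorphisms `u₁, …, u₅` of `F₄` (indexed by
`Fin 5`): `u₁(b₁) = a₁b₁`, `u₂(a₁) = b₁⁻¹a₁`, `u₃(b₁) = b₁a₁a₂⁻¹`,
`u₃(b₂) = a₂a₁⁻¹b₂`, `u₄(a₂) = b₂⁻¹a₂`, `u₅(b₂) = b₂a₂`, each fixing all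
other generators. -/
def uSpec (u : Fin 5 → MulAut F4) : Prop :=
  (u 0 (of 0) = of 0 ∧ u 0 (of 1) = of 1 ∧
    u 0 (of 2) = of 0 * of 2 ∧ u 0 (of 3) = of 3) ∧
  (u 1 (of 0) = (of 2)⁻¹ * of 0 ∧ u 1 (of 1) = of 1 ∧
    u 1 (of 2) = of 2 ∧ u 1 (of 3) = of 3) ∧
  (u 2 (of 0) = of 0 ∧ u 2 (of 1) = of 1 ∧
    u 2 (of 2) = of 2 * of 0 * (of 1)⁻¹ ∧ u 2 (of 3) = of 1 * (of 0)⁻¹ * of 3) ∧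
  (u 3 (of 0) = of 0 ∧ u 3 (of 1) = (of 3)⁻¹ * of 1 ∧
    u 3 (of 2) = of 2 ∧ u 3 (of 3) = of 3) ∧
  (u 4 (of 0) = of 0 ∧ u 4 (of 1) = of 1 ∧
    u 4 (of 2) = of 2 ∧ u 4 (of 3) = of 3 * of 1)

theorem FreeGroup.mulAut_ext {α : Type*} {φ ψ : MulAut (FreeGroup α)}
    (h : ∀ a, φ (of a) = ψ (of a)) : φ = ψ :=
  MulEquiv.toMonoidHom_injective (FreeGroup.ext_hom _ _ h)

namespace uSpec

variable {u : Fin 5 → MulAut F4}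

theorem commute_of_add_two_le (hu : uSpec u) {i j : Fin 5} (hij : (i : ℕ) + 2 ≤ j) :
    Commute (u i) (u j) := by
  unfold uSpec at hu
  obtain ⟨i, hi⟩ := i
  obtain ⟨j, hj⟩ := j
  dsimp only at hij
  interval_cases i <;> interval_cases j <;>
  · refine mulAut_ext fun a ↦ ?_
    fin_cases a <;>
    · simp only [Fin.reduceFinMk, MulAut.mul_apply, _root_.map_mul, _root_.map_inv, hu, mul_assoc]

theorem braid_of_add_one_eq (hu : uSpec u) {i j : Fin 5} (hij : (i : ℕ) + 1 = j) :
    u i * u j * u i = u j * u i * u j := by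
  unfold uSpec at hu
  obtain ⟨i, hi⟩ := i
  obtain ⟨j, hj⟩ := j
  dsimp only at hij
  subst hij
  replace hi : i < 4 := by omega
  interval_cases i <;>
  · refine mulAut_ext fun a ↦ ?_
    fin_cases a <;>
    · simp only [Nat.reduceAdd, Fin.reduceFinMk, MulAut.mul_apply, _root_.map_mul,
        _root_.map_inv, hu, mul_assoc, mul_inv_rev, inv_inv, mul_inv_cancel_left,
        inv_mul_cancel_left]

end uSpec

/-- The automorphisms `u₁, …, u₅` of `F₄` satisfy all the braid relations:
`uᵢuⱼ = uⱼuᵢ` for `|i−j| > 1` and `uᵢuⱼuᵢ = uⱼuᵢuⱼ` for `|i−j| = 1`. -/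
theorem u_braid_relations (u : Fin 5 → MulAut F4) (hu : uSpec u) :
    ∀ i j : Fin 5,
      (|(i : ℤ) - (j : ℤ)| > 1 → u i * u j = u j * u i) ∧
      (|(i : ℤ) - (j : ℤ)| = 1 → u i * u j * u i = u j * u i * u j) := by
  intro i j
  refine ⟨fun h ↦ ?_, fun h ↦ ?_⟩
  · obtain hij | hji : (i : ℕ) + 2 ≤ j ∨ (j : ℕ) + 2 ≤ i := by
      rw [gt_iff_lt, lt_abs] at h
      omega
    exacts [(hu.commute_of_add_two_le hij).eq, (hu.commute_of_add_two_le hji).eq.symm]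
  · obtain hij | hji : (i : ℕ) + 1 = j ∨ (j : ℕ) + 1 = i := by
      rw [abs_eq zero_le_one] at h
      omega
    exacts [hu.braid_of_add_one_eq hij, (hu.braid_of_add_one_eq hji).symm]
end

section
/- There exists a group homomorphism f: B_6 → Aut(F_4) from the braid group on 6 strands with f(σ_i) = u_i for i = 1,…,5. -/
open FreeGroup

/-- The braid relations defining the braid group `B₆` on generators `σ₁, …, σ₅`. -/
def braidRels6 : Set (FreeGroup (Fin 5)) :=
  { r | (∃ i j : Fin 5, |(i : ℤ) - (j : ℤ)| = 1 ∧
          r = of i * of j * of i * (of j * of i * of j)⁻¹) ∨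
        (∃ i j : Fin 5, |(i : ℤ) - (j : ℤ)| > 1 ∧
          r = of i * of j * (of j * of i)⁻¹) }

/-!
A presentation yields a homomorphism as soon as the proposed images satisfy the relations, and an
automorphism of a free group is determined by the images of the generators. So each braid relation
among the `uᵢ` reduces to four identities in `F₄`, one per generator, checked by free reduction.
-/

theorem MulAut.ext_freeGroup {α : Type*} {e₁ e₂ : MulAut (FreeGroup α)}
    (h : ∀ a, e₁ (of a) = e₂ (of a)) : e₁ = e₂ :=
  MulEquiv.toMonoidHom_injective (FreeGroup.ext_hom _ _ h)

theorem Fin.exists_castSucc_succ_of_abs_sub_eq_one {n : ℕ} {i j : Fin (n + 1)}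
    (h : |(i : ℤ) - (j : ℤ)| = 1) :
    ∃ k : Fin n, (i = k.castSucc ∧ j = k.succ) ∨ (i = k.succ ∧ j = k.castSucc) := by
  rcases abs_eq (zero_le_one' ℤ) |>.mp h with h | h
  · exact ⟨⟨j, by omega⟩, .inr ⟨Fin.ext (by simp only [Fin.val_succ]; omega), rfl⟩⟩
  · exact ⟨⟨i, by omega⟩, .inl ⟨rfl, Fin.ext (by simp only [Fin.val_succ]; omega)⟩⟩

theorem Fin.val_add_one_lt_or_of_one_lt_abs_sub {n : ℕ} {i j : Fin n}
    (h : 1 < |(i : ℤ) - (j : ℤ)|) : (i : ℕ) + 1 < j ∨ (j : ℕ) + 1 < i := by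
  rcases lt_abs.mp h with h | h <;> omega

theorem exists_hom_braidRels6 {G : Type*} [Group G] (g : Fin 5 → G)
    (hbraid : ∀ k : Fin 4,
      g k.castSucc * g k.succ * g k.castSucc = g k.succ * g k.castSucc * g k.succ)
    (hcomm : ∀ i j : Fin 5, (i : ℕ) + 1 < j → g i * g j = g j * g i) :
    ∃ f : PresentedGroup braidRels6 →* G, ∀ i, f (PresentedGroup.of i) = g i := by
  have hrels : ∀ r ∈ braidRels6, FreeGroup.lift g r = 1 := by
    rintro r (⟨i, j, hij, rfl⟩ | ⟨i, j, hij, rfl⟩) <;>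
      simp only [_root_.map_mul, _root_.map_inv, FreeGroup.lift_apply_of, mul_inv_eq_one]
    · obtain ⟨k, ⟨rfl, rfl⟩ | ⟨rfl, rfl⟩⟩ := Fin.exists_castSucc_succ_of_abs_sub_eq_one hij
      exacts [hbraid k, (hbraid k).symm]
    · obtain hij | hij := Fin.val_add_one_lt_or_of_one_lt_abs_sub hij
      exacts [hcomm i j hij, (hcomm j i hij).symm]
  exact ⟨PresentedGroup.toGroup hrels, fun i => PresentedGroup.toGroup.of hrels⟩

namespace uSpec

variable {u : Fin 5 → MulAut F4}

theorem braid (hu : uSpec u) (k : Fin 4) :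
    u k.castSucc * u k.succ * u k.castSucc = u k.succ * u k.castSucc * u k.succ := by
  simp only [uSpec] at hu
  fin_cases k <;> refine MulAut.ext_freeGroup fun a => ?_ <;> fin_cases a <;>
    simp only [Fin.isValue, Fin.zero_eta, Fin.mk_one, Fin.reduceFinMk, Fin.reduceCastSucc,
      Fin.reduceSucc, Fin.castSucc_zero, Fin.castSucc_one, Fin.succ_zero_eq_one,
      Fin.succ_one_eq_two, MulAut.mul_apply, hu, _root_.map_mul, _root_.map_inv] <;>
    group

theorem commute (hu : uSpec u) (i j : Fin 5) (hij : (i : ℕ) + 1 < j) :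
    u i * u j = u j * u i := by
  simp only [uSpec] at hu
  obtain ⟨i, hi⟩ := i
  obtain ⟨j, hj⟩ := j
  interval_cases i <;> interval_cases j <;> refine MulAut.ext_freeGroup fun a => ?_ <;>
    fin_cases a <;>
    simp only [Fin.isValue, Fin.reduceFinMk, Fin.mk_one, Fin.zero_eta, MulAut.mul_apply, hu,
      _root_.map_mul, _root_.map_inv] <;>
    group

end uSpec

/-- There is a group homomorphism `f : B₆ → Aut(F₄)` with `f(σᵢ) = uᵢ` for
`i = 1, …, 5`. -/
theorem exists_hom_B6_to_AutF4 (u : Fin 5 → MulAut F4) (hu : uSpec u) :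
    ∃ f : PresentedGroup braidRels6 →* MulAut F4,
      ∀ i : Fin 5, f (PresentedGroup.of i) = u i :=
  exists_hom_braidRels6 u hu.braid hu.commute
end

section
/- The submonoid of Aut(F_2) generated by the automorphisms G: (a,b) ↦ (a, ab) and D: (a,b) ↦ (ba, b) is a free monoid on these two generators. -/
/-!
Abelianization sends an endomorphism of `F₂` to a `2 × 2` integer matrix, multiplicatively; it
maps `G` to `!![1, 1; 0, 1]` and `D` to `!![1, 0; 1, 1]`. Every product of these two matrices has
nonnegative entries and determinant `1`. Left multiplication by the first adds the second row to
the first, by the second adds the first row to the second, so a product starting with `G` cannot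
equal one starting with `D` (the first row of the remaining factor would vanish, contradicting
`det = 1`), nor can a nonempty product be the identity. Hence the first letter of a word is
determined by its image, and cancelling it in the group `Aut(F₂)` gives freeness by induction.
-/

open FreeGroup Matrix

namespace FreeGroup

variable {ι : Type*} [DecidableEq ι]

def abelianizationVec : FreeGroup ι →* Multiplicative (ι → ℤ) :=
  FreeGroup.lift fun i => .ofAdd (Pi.single i 1)

@[simp]
lemma abelianizationVec_of (i : ι) : abelianizationVec (of i) = .ofAdd (Pi.single i 1) :=
  lift_apply_of

def abelianizationMatrix (f : FreeGroup ι →* FreeGroup ι) : Matrix ι ι ℤ :=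
  .of fun i j => (abelianizationVec (f (of j))).toAdd i

lemma abelianizationMatrix_id : abelianizationMatrix (MonoidHom.id (FreeGroup ι)) = 1 := by
  ext i j
  simp [abelianizationMatrix, one_apply, Pi.single_apply]

variable [Fintype ι]

lemma toAdd_abelianizationVec_apply (f : FreeGroup ι →* FreeGroup ι) (y : FreeGroup ι) :
    (abelianizationVec (f y)).toAdd = abelianizationMatrix f *ᵥ (abelianizationVec y).toAdd := by
  induction y with
  | C1 => simp
  | of j => ext i; simp [abelianizationMatrix]
  | inv_of j ih => simp [ih, mulVec_neg]
  | mul x y hx hy => simp [hx, hy, mulVec_add]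

lemma abelianizationMatrix_comp (f g : FreeGroup ι →* FreeGroup ι) :
    abelianizationMatrix (f.comp g) = abelianizationMatrix f * abelianizationMatrix g := by
  ext i j
  change (abelianizationVec (f (g (of j)))).toAdd i = _
  rw [toAdd_abelianizationVec_apply f]
  rfl

def abelianizationMatrixHom : MulAut (FreeGroup ι) →* Matrix ι ι ℤ where
  toFun T := abelianizationMatrix T.toMonoidHom
  map_one' := abelianizationMatrix_id
  map_mul' S T := abelianizationMatrix_comp S.toMonoidHom T.toMonoidHom

lemma abelianizationMatrixHom_apply (T : MulAut (FreeGroup ι)) (i j : ι) :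
    abelianizationMatrixHom T i j = (abelianizationVec (T (of j))).toAdd i :=
  rfl

end FreeGroup

section GDMatrix

variable {R : Type*} [CommRing R]

variable (R) in
def gdMatrix : Bool → Matrix (Fin 2) (Fin 2) R
  | true => !![1, 1; 0, 1]
  | false => !![1, 0; 1, 1]

lemma gdMatrix_true_mul (M : Matrix (Fin 2) (Fin 2) R) :
    gdMatrix R true * M = !![M 0 0 + M 1 0, M 0 1 + M 1 1; M 1 0, M 1 1] := by
  ext i j; fin_cases i <;> fin_cases j <;> simp [gdMatrix, mul_apply]

lemma gdMatrix_false_mul (M : Matrix (Fin 2) (Fin 2) R) :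
    gdMatrix R false * M = !![M 0 0, M 0 1; M 0 0 + M 1 0, M 0 1 + M 1 1] := by
  ext i j; fin_cases i <;> fin_cases j <;> simp [gdMatrix, mul_apply]

@[simp]
lemma det_gdMatrix (x : Bool) : (gdMatrix R x).det = 1 := by
  cases x <;> simp [gdMatrix, det_fin_two_of]

variable [LinearOrder R] [IsStrictOrderedRing R]

lemma nonneg_and_det_eq_one_prod_gdMatrix (l : List Bool) :
    (∀ i j, 0 ≤ (l.map (gdMatrix R)).prod i j) ∧ (l.map (gdMatrix R)).prod.det = 1 := by
  induction l with
  | nil => simp [Fin.forall_fin_two]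
  | cons x l ih =>
    obtain ⟨hM, hdet⟩ := ih
    refine ⟨?_, by simp [hdet]⟩
    have := hM 0 0; have := hM 0 1; have := hM 1 0; have := hM 1 1
    cases x <;> simp [gdMatrix_true_mul, gdMatrix_false_mul, Fin.forall_fin_two, add_nonneg, *]

lemma gdMatrix_mul_ne_one {M : Matrix (Fin 2) (Fin 2) R} (hM : ∀ i j, 0 ≤ M i j) (x : Bool) :
    gdMatrix R x * M ≠ 1 := by
  intro h
  have := hM 0 1; have := hM 1 0
  rw [← Matrix.ext_iff] at h
  cases x <;> simp [gdMatrix_true_mul, gdMatrix_false_mul, Fin.forall_fin_two, one_apply] at h <;>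
    linarith

lemma gdMatrix_true_mul_ne_false_mul {M N : Matrix (Fin 2) (Fin 2) R} (hM : ∀ i j, 0 ≤ M i j)
    (hMdet : M.det = 1) (hN : ∀ i j, 0 ≤ N i j) :
    gdMatrix R true * M ≠ gdMatrix R false * N := by
  intro h
  rw [← Matrix.ext_iff] at h
  simp only [gdMatrix_true_mul, gdMatrix_false_mul, Fin.forall_fin_two, of_apply, cons_val',
    cons_val_zero, cons_val_one, empty_val', cons_val_fin_one] at h
  obtain ⟨⟨h00, h01⟩, h10, h11⟩ := h
  have hM00 : M 0 0 = 0 := by linarith [hM 0 0, hN 1 0]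
  have hM01 : M 0 1 = 0 := by linarith [hM 0 1, hN 1 1]
  simp [det_fin_two, hM00, hM01] at hMdet

lemma eq_of_gdMatrix_mul_eq {M N : Matrix (Fin 2) (Fin 2) R} (hM : ∀ i j, 0 ≤ M i j)
    (hMdet : M.det = 1) (hN : ∀ i j, 0 ≤ N i j) (hNdet : N.det = 1) {x y : Bool}
    (h : gdMatrix R x * M = gdMatrix R y * N) : x = y := by
  cases x <;> cases y
  · rfl
  · exact absurd h.symm (gdMatrix_true_mul_ne_false_mul hN hNdet hM)
  · exact absurd h (gdMatrix_true_mul_ne_false_mul hM hMdet hN)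
  · rfl

end GDMatrix

lemma List.injective_prod_map_of_head_eq {M α : Type*} [LeftCancelMonoid M] {f : α → M}
    (head_eq : ∀ x y (l l' : List α), f x * (l.map f).prod = f y * (l'.map f).prod → x = y)
    (ne_one : ∀ x (l : List α), f x * (l.map f).prod ≠ 1) :
    Function.Injective fun l : List α => (l.map f).prod := by
  intro l₁ l₂ h
  induction l₁ generalizing l₂ with
  | nil =>
    cases l₂ with
    | nil => rfl
    | cons y l => exact absurd h.symm (ne_one y l)
  | cons x l ih =>
    cases l₂ with
    | nil => exact absurd h (ne_one x l)
    | cons y l' =>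
      simp only [List.map_cons, List.prod_cons] at h
      obtain rfl := head_eq x y l l' h
      rw [ih (mul_left_cancel h)]

/-- The submonoid of `Aut(F₂)` generated by `G : (a,b) ↦ (a, ab)` and
`D : (a,b) ↦ (ba, b)` is free on these generators: two products of elements of
`{G, D}` coincide only if the corresponding words in the two letters coincide. -/
theorem GD_free_monoid
    (G D : MulAut (FreeGroup (Fin 2)))
    (hGa : G (of 0) = of 0) (hGb : G (of 1) = of 0 * of 1)
    (hDa : D (of 0) = of 1 * of 0) (hDb : D (of 1) = of 1) :
    ∀ l₁ l₂ : List Bool,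
      (l₁.map (fun x => if x then G else D)).prod =
        (l₂.map (fun x => if x then G else D)).prod → l₁ = l₂ := by
  set f : Bool → MulAut (FreeGroup (Fin 2)) := fun x => if x then G else D
  have hf : ∀ x, abelianizationMatrixHom (f x) = gdMatrix ℤ x := by
    rintro (_ | _) <;> ext i j <;> fin_cases i <;> fin_cases j <;>
      simp [f, gdMatrix, abelianizationMatrixHom_apply, hGa, hGb, hDa, hDb]
  have hprod (l : List Bool) :
      abelianizationMatrixHom (l.map f).prod = (l.map (gdMatrix ℤ)).prod := by
    rw [map_list_prod, List.map_map]
    exact congrArg _ (List.map_congr_left fun x _ => hf x)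
  refine List.injective_prod_map_of_head_eq (fun x y l l' h => ?_) (fun x l h => ?_)
  · replace h := congrArg abelianizationMatrixHom h
    simp only [_root_.map_mul, hf, hprod] at h
    obtain ⟨hM, hMdet⟩ := nonneg_and_det_eq_one_prod_gdMatrix (R := ℤ) l
    obtain ⟨hN, hNdet⟩ := nonneg_and_det_eq_one_prod_gdMatrix (R := ℤ) l'
    exact eq_of_gdMatrix_mul_eq hM hMdet hN hNdet h
  · replace h := congrArg abelianizationMatrixHom h
    simp only [_root_.map_mul, hf, hprod, _root_.map_one] at h
    exact gdMatrix_mul_ne_one (nonneg_and_det_eq_one_prod_gdMatrix l).1 x h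
end
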